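/- Let X be a connected graph whose vertex set is ℤ^d (d ≥ 1) with the ℓ^∞ adjacency (x ~ y iff ‖x−y‖_∞ = 1), and let S be a finite connected subset of vertices such that the origin o lies in a finite component of the complement of S, with |S| = n. Then S contains a point of the positive coordinate axis {(j,0,…,0) : j ≥ 1} at distance at most n from the origin, i.e., S contains (j,0,…,0) for some 1 ≤ j ≤ n. -/

import Mathlib

/-- The graph on `ℤ^d` where `x ~ y` iff `‖x - y‖_∞ = 1` (adjacency including diagonals). -/
def boxGraph (d : ℕ) : SimpleGraph (Fin d → ℤ) where
  Adj x y := x ≠ y ∧ ∀ i, |x i - y i| ≤ 1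
  symm := by
    constructor
    intro x y ⟨hne, h⟩
    exact ⟨hne.symm, fun i => by rw [abs_sub_comm]; exact h i⟩
  loopless := by constructor; intro x ⟨hne, _⟩; exact hne rfl

/-!
A connected set `S` separating the origin from infinity must meet each of the two rays
`{j e₁ : j ≥ 1}` and `{-j e₁ : j ≥ 1}`, since otherwise that ray would lie in the finite
component of the origin. Let `j e₁` and `-k e₁` be such points. A path inside `S` joining them
has fewer than `|S| = n` edges, and the first coordinate changes by at most `1` along each
edge, so `j + k < n`, whence `j ≤ n`.
-/

namespace SimpleGraph

variable {V : Type*} {G : SimpleGraph V}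

theorem Walk.abs_sub_le_length (φ : V → ℤ) (hφ : ∀ u v, G.Adj u v → |φ u - φ v| ≤ 1)
    {a b : V} (w : G.Walk a b) : |φ a - φ b| ≤ w.length := by
  induction w with
  | nil => simp
  | @cons u v x hadj w ih =>
    calc |φ u - φ x| ≤ |φ u - φ v| + |φ v - φ x| := abs_sub_le _ _ _
      _ ≤ 1 + w.length := add_le_add (hφ u v hadj) ih
      _ = (cons hadj w).length := by push_cast [Walk.length_cons]; ring

theorem Connected.exists_walk_length_lt [Fintype V] (hG : G.Connected) (a b : V) :
    ∃ w : G.Walk a b, w.length < Fintype.card V := by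
  classical
  obtain ⟨w⟩ := hG.preconnected a b
  exact ⟨w.toPath, w.toPath.2.length_lt⟩

theorem exists_mem_of_supp_finite {S : Set V} {v : V} (f : ℕ → V) (hf : Function.Injective f)
    (hadj : ∀ m, G.Adj (f m) (f (m + 1))) (hf0 : f 0 = v) (hv : v ∉ S)
    (hfin : ((G.induce Sᶜ).connectedComponentMk ⟨v, hv⟩).supp.Finite) :
    ∃ m, f m ∈ S := by
  subst hf0
  by_contra! hS
  let g : ℕ → ↥Sᶜ := fun m => ⟨f m, hS m⟩
  have hreach : ∀ m, (G.induce Sᶜ).Reachable ⟨f 0, hv⟩ (g m) := by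
    intro m
    induction m with
    | zero => rfl
    | succ m ih => exact ih.trans (Adj.reachable (hadj m))
  refine Set.infinite_of_injective_forall_mem (f := g) (fun a b hab => hf ?_) (fun m => ?_) hfin
  · exact congrArg Subtype.val hab
  · exact ConnectedComponent.sound (hreach m).symm

end SimpleGraph

theorem boxGraph_adj_single {d : ℕ} (i : Fin d) {a b : ℤ} (h : |a - b| = 1) :
    (boxGraph d).Adj (Pi.single i a) (Pi.single i b) := by
  refine ⟨fun hab => ?_, fun k => ?_⟩
  · rw [Pi.single_injective i |>.eq_iff] at hab
    simp [hab] at h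
  · rcases eq_or_ne k i with rfl | hk
    · simp [h]
    · simp [hk]

theorem exists_single_mem_of_separating {d : ℕ} (i : Fin d) {ε : ℤ} (hε : |ε| = 1)
    {S : Set (Fin d → ℤ)} (h0 : (0 : Fin d → ℤ) ∉ S)
    (hsep : (((boxGraph d).induce Sᶜ).connectedComponentMk ⟨0, h0⟩).supp.Finite) :
    ∃ m : ℕ, 0 < m ∧ Pi.single i (ε * m) ∈ S := by
  have hε0 : ε ≠ 0 := by rintro rfl; simp at hε
  let f : ℕ → Fin d → ℤ := fun m => Pi.single i (ε * m)
  have hf0 : f 0 = 0 := by simp [f]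
  have hf : Function.Injective f := fun a b hab => by
    simpa [f, hε0] using Pi.single_injective i hab
  have hadj : ∀ m, (boxGraph d).Adj (f m) (f (m + 1)) := fun m =>
    boxGraph_adj_single i (by rw [Nat.cast_succ, mul_add_one, sub_add_cancel_left, abs_neg, hε])
  obtain ⟨m, hm⟩ := SimpleGraph.exists_mem_of_supp_finite f hf hadj hf0 h0 hsep
  refine ⟨m, Nat.pos_of_ne_zero fun hm0 => h0 ?_, hm⟩
  rwa [hm0, hf0] at hm

theorem stmt_11 (d : ℕ) (hd : 1 ≤ d) (S : Set (Fin d → ℤ)) (hSfin : S.Finite)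
    (hSconn : ((boxGraph d).induce S).Connected)
    (n : ℕ) (hn : S.ncard = n)
    (h0 : (0 : Fin d → ℤ) ∉ S)
    (hsep : (((boxGraph d).induce Sᶜ).connectedComponentMk ⟨0, h0⟩).supp.Finite) :
    ∃ j : ℤ, 1 ≤ j ∧ j ≤ (n : ℤ) ∧ (fun i : Fin d => if (i : ℕ) = 0 then j else 0) ∈ S := by
  let i₀ : Fin d := ⟨0, hd⟩
  have haxis : ∀ j : ℤ, (fun i : Fin d => if (i : ℕ) = 0 then j else 0) = Pi.single i₀ j := by
    intro j; ext i; simp [Pi.single_apply, Fin.ext_iff, i₀]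
  obtain ⟨j, hj, hjS⟩ := exists_single_mem_of_separating i₀ (ε := 1) (by norm_num) h0 hsep
  obtain ⟨k, hk, hkS⟩ := exists_single_mem_of_separating i₀ (ε := -1) (by norm_num) h0 hsep
  rw [one_mul] at hjS
  rw [neg_one_mul] at hkS
  have := hSfin.fintype
  obtain ⟨w, hw⟩ := hSconn.exists_walk_length_lt ⟨_, hjS⟩ ⟨_, hkS⟩
  rw [← Nat.card_eq_fintype_card, Nat.card_coe_set_eq, hn] at hw
  have hcoord : |(j : ℤ) - -k| ≤ w.length := by
    simpa using w.abs_sub_le_length (fun x => x.1 i₀)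
      fun u v (huv : ((boxGraph d).induce S).Adj u v) => huv.2 i₀
  rw [abs_le] at hcoord
  exact ⟨j, by omega, by omega, haxis j ▸ hjS⟩
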